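/- Assume ψ ∈ C([0, T]; H^γ) for some γ ≥ 0, and let G : H → R^{2JK} be the Lagrangian observation operator mapping an initial velocity field u for the Stokes equation dv/dt + νAv = ψ, v(0) = u, to the positions (z_j(t_k))_{j=1..J, k=1..K} of J Lagrangian tracers z_j(t) = z_{j,0} + ∫₀ᵗ v(z_j(s), s) ds at fixed observation times 0 < t₁ < … < t_K ≤ T. Then for any ℓ ≥ 0 there is C > 0 such that for all u ∈ H^ℓ, |G(u)| ≤ C(1 + ‖u‖_ℓ). -/

import Mathlib

/-!
STATEMENT 11 (Lemma 4.4, first part, of the paper, `l:5a`: bound on the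
Lagrangian observation operator).

Setting: the Stokes equations on the periodic unit square, `dv/dt + νAv = ψ`,
`v(0) = u`, encoded spectrally through the eigenbasis `φ_k`, `k ∈ ℤ²∖{0}`, of
the Stokes operator (eigenvalues `λ_k = 4π²|k|²`), with the mild solution map
`V : H → (time → H)` given coefficientwise, point evaluation `ev` on the torus
satisfying the Sobolev embedding bound, and the analytic-semigroup smoothing
estimate (as licensed by the problem context).  `J` tracers `z_j` solve the
integral equations `z_j(t) = z_{j,0} + ∫₀ᵗ v(z_j(s),s) ds` and are observed at
times `0 < t₁ < … < t_K ≤ T`; the observation operator is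
`G(u) = (z_j(t_k))_{j,k} ∈ ℝ^{2JK}`.

Conclusion: if `ψ ∈ C([0,T];H^γ)` with `γ ≥ 0`, then for every `ℓ ≥ 0` there
is `C > 0` with `|G(u)| ≤ C(1 + ‖u‖_ℓ)` for all `u ∈ H^ℓ`.
-/

open MeasureTheory Real Filter

/-- the wavevectors `k ∈ ℤ²∖{0}` indexing the Stokes eigenbasis on the torus -/
abbrev Kidx : Type := {k : ℤ × ℤ // k ≠ 0}

/-- Euclidean norm of a finite real vector -/
noncomputable def eucNorm {ι : Type*} [Fintype ι] (v : ι → ℝ) : ℝ :=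
  Real.sqrt (∑ i, v i ^ 2)

/-- squared spectrally-defined Sobolev norm `‖u‖_s²` -/
noncomputable def sobSq {H : Type*} [NormedAddCommGroup H] [InnerProductSpace ℝ H]
    [CompleteSpace H] (φ : HilbertBasis Kidx ℝ H) (lam : Kidx → ℝ) (s : ℝ) (u : H) : ℝ :=
  ∑' k, lam k ^ s * (φ.repr u k : ℝ) ^ 2

/-- spectrally-defined Sobolev norm `‖u‖_s` (`H^s = D(A^{s/2})`) -/
noncomputable def sobNorm {H : Type*} [NormedAddCommGroup H] [InnerProductSpace ℝ H]
    [CompleteSpace H] (φ : HilbertBasis Kidx ℝ H) (lam : Kidx → ℝ) (s : ℝ) (u : H) : ℝ :=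
  Real.sqrt (sobSq φ lam s u)

/-- membership in the Sobolev space `H^s` -/
def MemHs {H : Type*} [NormedAddCommGroup H] [InnerProductSpace ℝ H]
    [CompleteSpace H] (φ : HilbertBasis Kidx ℝ H) (lam : Kidx → ℝ) (s : ℝ) (u : H) : Prop :=
  Summable fun k => lam k ^ s * (φ.repr u k : ℝ) ^ 2

/-- `v` is the mild solution of the Stokes equation `dv/dt + νAv = ψ`, `v(0) = u`,
on `[0,T]`, expressed coefficientwise by the variation-of-constants formula. -/
def IsStokesSolution {H : Type*} [NormedAddCommGroup H] [InnerProductSpace ℝ H]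
    [CompleteSpace H] (φ : HilbertBasis Kidx ℝ H) (lam : Kidx → ℝ)
    (ν T : ℝ) (ψ : ℝ → H) (u : H) (v : ℝ → H) : Prop :=
  v 0 = u ∧ ∀ k : Kidx, ∀ t ∈ Set.Icc (0 : ℝ) T,
    (φ.repr (v t) k : ℝ) = Real.exp (-(ν * lam k * t)) * (φ.repr u k : ℝ) +
      ∫ s in (0 : ℝ)..t, Real.exp (-(ν * lam k * (t - s))) * (φ.repr (ψ s) k : ℝ)


/-!
Along a tracer the velocity is `ev x (v σ)`, bounded by the Sobolev embedding `H^{3/2} ↪ L^∞` and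
the smoothing estimate by `C (σ^{-(3/2 - ℓ')/2} ‖u‖_{ℓ'} + ‖ψ‖)` with `ℓ' = min ℓ (3/2)`. The
singularity at `σ = 0` is integrable, so integrating the tracer equation gives
`|z_j(t_k)| ≤ A + B ‖u‖_ℓ`, uniformly in `j, k`.

The embedding needs `v(σ) ∈ H^{3/2}`, which is read off from the variation-of-constants formula:
the free part is controlled by `λ^{s/2} e^{-νλτ} ≤ C τ^{-s/2}`; for the Duhamel part, writing the
partial sum `X = ∑_{k ∈ F} λ_k^s b_k²` as a time integral and applying Cauchy–Schwarz in `k` under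
the integral gives `X ≤ √X · ∫₀ᵗ C (t-σ)^{-s/2} sup ‖ψ‖ dσ`, a bound on `X` independent of `F`.
-/

open Set

theorem exists_rpow_le_mul_exp {a : ℝ} (ha : 0 ≤ a) :
    ∃ C, 0 ≤ C ∧ ∀ y : ℝ, 0 ≤ y → y ^ a ≤ C * exp y := by
  set n := ⌈a⌉₊
  refine ⟨1 + n.factorial, by positivity, fun y hy => ?_⟩
  have hexp : 0 ≤ exp y := (exp_pos y).le
  rcases le_total y 1 with hy1 | hy1
  · calc y ^ a ≤ 1 := rpow_le_one hy hy1 ha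
      _ ≤ exp y := one_le_exp hy
      _ ≤ (1 + n.factorial) * exp y := le_mul_of_one_le_left hexp (by simp)
  · have hpow : y ^ n ≤ n.factorial * exp y := by
      have := Real.pow_div_factorial_le_exp y hy n
      rwa [div_le_iff₀ (by positivity), mul_comm] at this
    calc y ^ a ≤ y ^ (n : ℝ) := rpow_le_rpow_of_exponent_le hy1 (Nat.le_ceil a)
      _ = y ^ n := rpow_natCast y n
      _ ≤ (1 + n.factorial) * exp y := by nlinarith

theorem exists_rpow_mul_exp_neg_mul_le {a c : ℝ} (ha : 0 ≤ a) (hc : 0 < c) :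
    ∃ C, 0 ≤ C ∧ ∀ μ τ : ℝ, 0 ≤ μ → 0 < τ → μ ^ a * exp (-(c * μ * τ)) ≤ C * τ ^ (-a) := by
  obtain ⟨C, hC, hbound⟩ := exists_rpow_le_mul_exp ha
  refine ⟨C * c ^ (-a), by positivity, fun μ τ hμ hτ => ?_⟩
  have hcτ : 0 < c * τ := mul_pos hc hτ
  have key := hbound (c * μ * τ) (by positivity)
  rw [show c * μ * τ = (c * τ) * μ by ring, mul_rpow hcτ.le hμ] at key
  rw [show c * μ * τ = (c * τ) * μ by ring, exp_neg, ← div_eq_mul_inv, div_le_iff₀ (exp_pos _),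
    rpow_neg hc.le, rpow_neg hτ.le]
  calc μ ^ a = ((c * τ) ^ a)⁻¹ * ((c * τ) ^ a * μ ^ a) := by
        rw [inv_mul_cancel_left₀ (rpow_pos_of_pos hcτ a).ne']
    _ ≤ ((c * τ) ^ a)⁻¹ * (C * exp (c * τ * μ)) := by gcongr
    _ = C * (c ^ a)⁻¹ * (τ ^ a)⁻¹ * exp (c * τ * μ) := by
        rw [mul_rpow hc.le hτ.le, mul_inv]; ring

theorem le_sq_of_le_sqrt_mul {X K : ℝ} (hX : 0 ≤ X) (h : X ≤ √X * K) : X ≤ K ^ 2 := by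
  nlinarith [sq_sqrt hX, sqrt_nonneg X]

theorem intervalIntegrable_sub_rpow {r : ℝ} (hr : -1 < r) (t : ℝ) :
    IntervalIntegrable (fun s => (t - s) ^ r) volume 0 t := by
  simpa using
    ((intervalIntegral.intervalIntegrable_rpow' (a := 0) (b := t) hr).comp_sub_left t).symm

theorem sum_sq_mul_le_of_abs_le {ι : Type*} {F : Finset ι} {a g : ι → ℝ} {A M : ℝ}
    (ha : ∀ k, |a k| ≤ A) (hg : ∑ k ∈ F, g k ^ 2 ≤ M) : ∑ k ∈ F, (a k * g k) ^ 2 ≤ A ^ 2 * M := by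
  calc ∑ k ∈ F, (a k * g k) ^ 2 ≤ ∑ k ∈ F, A ^ 2 * g k ^ 2 := by
        refine Finset.sum_le_sum fun k _ => ?_
        rw [mul_pow, ← sq_abs (a k)]
        gcongr
        exact ha k
    _ ≤ A ^ 2 * M := by
        rw [← Finset.mul_sum]
        exact mul_le_mul_of_nonneg_left hg (sq_nonneg _)

theorem summable_sq_mul_integral_exp_mul {ι : Type*} (ρ μ : ι → ℝ) {c D β t M : ℝ}
    (hD : 0 ≤ D) (hβ : β < 1) (ht : 0 < t)
    (hρ : ∀ k τ, 0 < τ → |ρ k * exp (-(c * μ k * τ))| ≤ D * τ ^ (-β))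
    (g : ι → ℝ → ℝ) (hg : ∀ k, ContinuousOn (g k) (Icc 0 t))
    (hM : ∀ s ∈ Icc 0 t, ∀ F : Finset ι, ∑ k ∈ F, g k s ^ 2 ≤ M) :
    Summable fun k => (ρ k * ∫ s in 0..t, exp (-(c * μ k * (t - s))) * g k s) ^ 2 := by
  set b : ι → ℝ := fun k => ρ k * ∫ s in 0..t, exp (-(c * μ k * (t - s))) * g k s
  set I := ∫ s in 0..t, (t - s) ^ (-β)
  refine summable_of_sum_le (c := (D * √M * I) ^ 2) (fun k => sq_nonneg _) fun F => ?_
  set X := ∑ k ∈ F, b k ^ 2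
  set y : ι → ℝ → ℝ := fun k s => ρ k * exp (-(c * μ k * (t - s))) * g k s
  have hy : ∀ k, IntervalIntegrable (y k) volume 0 t := fun k => by
    have := hg k
    exact ContinuousOn.intervalIntegrable_of_Icc ht.le (by fun_prop)
  have hX_eq : X = ∫ s in 0..t, ∑ k ∈ F, b k * y k s := by
    rw [intervalIntegral.integral_finsetSum fun k _ => (hy k).const_mul (b k)]
    refine Finset.sum_congr rfl fun k _ => ?_
    simp only [y, mul_assoc (ρ k)]
    rw [intervalIntegral.integral_const_mul, intervalIntegral.integral_const_mul, sq]
  have hpointwise : ∀ s ∈ Ioo 0 t, ∑ k ∈ F, b k * y k s ≤ √X * (D * √M * (t - s) ^ (-β)) := by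
    intro s hs
    have hτ : 0 < t - s := sub_pos.2 hs.2
    have hy_sq : ∑ k ∈ F, y k s ^ 2 ≤ (D * (t - s) ^ (-β)) ^ 2 * M :=
      sum_sq_mul_le_of_abs_le (fun k => hρ k _ hτ) (hM s (Ioo_subset_Icc_self hs) F)
    calc ∑ k ∈ F, b k * y k s ≤ √X * √(∑ k ∈ F, y k s ^ 2) := Real.sum_mul_le_sqrt_mul_sqrt _ _ _
      _ ≤ √X * (D * √M * (t - s) ^ (-β)) := by
          gcongr
          calc √(∑ k ∈ F, y k s ^ 2) ≤ √((D * (t - s) ^ (-β)) ^ 2 * M) := sqrt_le_sqrt hy_sq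
            _ = D * √M * (t - s) ^ (-β) := by
                rw [sqrt_mul (sq_nonneg _), sqrt_sq (by positivity)]; ring
  have hkernel := intervalIntegrable_sub_rpow (r := -β) (by linarith) t
  refine le_sq_of_le_sqrt_mul (Finset.sum_nonneg fun k _ => sq_nonneg _) ?_
  calc X = ∫ s in 0..t, ∑ k ∈ F, b k * y k s := hX_eq
    _ ≤ ∫ s in 0..t, √X * (D * √M * (t - s) ^ (-β)) :=
        intervalIntegral.integral_mono_on_of_le_Ioo ht.le
          (by simpa only [Finset.sum_fn] using
            IntervalIntegrable.sum F fun k _ => (hy k).const_mul (b k))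
          ((hkernel.const_mul _).const_mul _) hpointwise
    _ = √X * (D * √M * I) := by
        rw [intervalIntegral.integral_const_mul, intervalIntegral.integral_const_mul]

theorem HilbertBasis.sum_repr_sq_le {ι E : Type*} [NormedAddCommGroup E] [InnerProductSpace ℝ E]
    (b : HilbertBasis ι ℝ E) (v : E) (F : Finset ι) :
    ∑ i ∈ F, (b.repr v i : ℝ) ^ 2 ≤ ‖v‖ ^ 2 := by
  simpa only [b.repr_apply_apply, Real.norm_eq_abs, sq_abs] using
    b.orthonormal.sum_inner_products_le v (s := F)

theorem HilbertBasis.summable_repr_sq {ι E : Type*} [NormedAddCommGroup E]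
    [InnerProductSpace ℝ E] (b : HilbertBasis ι ℝ E) (v : E) :
    Summable fun i => (b.repr v i : ℝ) ^ 2 := by
  simpa only [b.repr_apply_apply, Real.norm_eq_abs, sq_abs] using
    b.orthonormal.inner_products_summable v

theorem memHs_of_mild {H : Type*} [NormedAddCommGroup H] [InnerProductSpace ℝ H]
    [CompleteSpace H] (φ : HilbertBasis Kidx ℝ H) (lam : Kidx → ℝ) {ν s t : ℝ}
    (hlam : ∀ k, 0 ≤ lam k) (hν : 0 < ν) (hs : 0 ≤ s) (hs2 : s < 2) (ht : 0 < t)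
    {ψ : ℝ → H} (hψ : ContinuousOn ψ (Icc 0 t)) {u w : H}
    (hw : ∀ k, (φ.repr w k : ℝ) = exp (-(ν * lam k * t)) * (φ.repr u k : ℝ) +
      ∫ σ in 0..t, exp (-(ν * lam k * (t - σ))) * (φ.repr (ψ σ) k : ℝ)) :
    MemHs φ lam s w := by
  obtain ⟨D, hD, hdecay⟩ := exists_rpow_mul_exp_neg_mul_le (a := s / 2) (by positivity) hν
  obtain ⟨M, hM⟩ := isCompact_Icc.exists_bound_of_continuousOn hψ
  have hρ : ∀ k τ, 0 < τ → |lam k ^ (s / 2) * exp (-(ν * lam k * τ))| ≤ D * τ ^ (-(s / 2)) :=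
    fun k τ hτ => by
      rw [abs_of_nonneg (by have := hlam k; positivity)]
      exact hdecay _ _ (hlam k) hτ
  have hfree : Summable fun k => (lam k ^ (s / 2) * (exp (-(ν * lam k * t)) * φ.repr u k)) ^ 2 := by
    refine .of_nonneg_of_le (fun k => sq_nonneg _) (fun k => ?_)
      ((φ.summable_repr_sq u).mul_left ((D * t ^ (-(s / 2))) ^ 2))
    rw [← mul_assoc, mul_pow, ← sq_abs (_ * exp _)]
    gcongr
    exact hρ k t ht
  have hforced := summable_sq_mul_integral_exp_mul (fun k => lam k ^ (s / 2)) lam hD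
    (by linarith) ht hρ (fun k σ => (φ.repr (ψ σ) k : ℝ))
    (fun k => by simpa only [φ.repr_apply_apply] using continuousOn_const.inner hψ)
    (M := M ^ 2) fun σ hσ F => (φ.sum_repr_sq_le _ F).trans (by gcongr; exact hM σ hσ)
  refine ((hfree.mul_left 2).add (hforced.mul_left 2)).of_nonneg_of_le
    (fun k => by have := hlam k; positivity) fun k => ?_
  have hsq : lam k ^ s = (lam k ^ (s / 2)) ^ 2 := by
    rw [← rpow_natCast, ← rpow_mul (hlam k)]; norm_num
  rw [hsq, hw k, ← mul_pow, mul_add]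
  linarith [add_sq_le (a := lam k ^ (s / 2) * (exp (-(ν * lam k * t)) * φ.repr u k))
    (b := lam k ^ (s / 2) * ∫ σ in 0..t, exp (-(ν * lam k * (t - σ))) * (φ.repr (ψ σ) k : ℝ))]

theorem IsStokesSolution.memHs {H : Type*} [NormedAddCommGroup H] [InnerProductSpace ℝ H]
    [CompleteSpace H] {φ : HilbertBasis Kidx ℝ H} {lam : Kidx → ℝ} {ν T s : ℝ} {ψ : ℝ → H}
    {u : H} {v : ℝ → H} (hv : IsStokesSolution φ lam ν T ψ u v) (hlam : ∀ k, 0 ≤ lam k)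
    (hν : 0 < ν) (hs : 0 ≤ s) (hs2 : s < 2) (hψ : ContinuousOn ψ (Icc 0 T)) {σ : ℝ}
    (hσ : σ ∈ Ioc 0 T) : MemHs φ lam s (v σ) :=
  memHs_of_mild φ lam hlam hν hs hs2 hσ.1 (hψ.mono (Icc_subset_Icc_right hσ.2))
    fun k => hv.2 k σ (Ioc_subset_Icc_self hσ)

theorem one_le_four_pi_sq_mul (k : Kidx) : 1 ≤ 4 * π ^ 2 * ((k.1.1 : ℝ) ^ 2 + (k.1.2 : ℝ) ^ 2) := by
  obtain ⟨⟨a, b⟩, hk⟩ := k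
  have hab : (1 : ℤ) ≤ a ^ 2 + b ^ 2 := by
    have : a ≠ 0 ∨ b ≠ 0 := by
      by_contra! h
      exact hk (by simp [h.1, h.2])
    have : 0 < a ^ 2 + b ^ 2 := by rcases this with h | h <;> positivity
    omega
  have hab' : (1 : ℝ) ≤ (a : ℝ) ^ 2 + (b : ℝ) ^ 2 := by exact_mod_cast hab
  nlinarith [pi_gt_three]

section SobolevScale

variable {H : Type*} [NormedAddCommGroup H] [InnerProductSpace ℝ H] [CompleteSpace H]
  {φ : HilbertBasis Kidx ℝ H} {lam : Kidx → ℝ}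

theorem MemHs.of_le (hlam : ∀ k, 1 ≤ lam k) {s s' : ℝ} (hs : s' ≤ s) {u : H}
    (hu : MemHs φ lam s u) : MemHs φ lam s' u :=
  .of_nonneg_of_le (fun k => by have := hlam k; positivity) (fun k => by gcongr; exact hlam k) hu

theorem sobNorm_le_sobNorm (hlam : ∀ k, 1 ≤ lam k) {s s' : ℝ} (hs : s' ≤ s) {u : H}
    (hu : MemHs φ lam s u) : sobNorm φ lam s' u ≤ sobNorm φ lam s u :=
  sqrt_le_sqrt ((hu.of_le hlam hs).tsum_le_tsum (fun k => by gcongr; exact hlam k) hu)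

end SobolevScale

theorem exists_smoothing_to_three_half {H : Type*} [NormedAddCommGroup H]
    [InnerProductSpace ℝ H] [CompleteSpace H] {φ : HilbertBasis Kidx ℝ H} {lam : Kidx → ℝ}
    (hlam : ∀ k, 1 ≤ lam k) {T γ Cψ ℓ : ℝ} {V : H → ℝ → H} (hγ : 0 ≤ γ)
    (hsmooth : ∀ ℓ s : ℝ, 0 ≤ ℓ → ℓ ≤ s → s < 2 + γ → ∃ C : ℝ, 0 < C ∧
      ∀ u : H, MemHs φ lam ℓ u → ∀ t ∈ Ioc (0 : ℝ) T,
        sobNorm φ lam s (V u t) ≤ C * (t ^ (-(s - ℓ) / 2) * sobNorm φ lam ℓ u + Cψ))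
    (hℓ : 0 ≤ ℓ) :
    ∃ C e : ℝ, 0 < C ∧ -1 < e ∧ ∀ u : H, MemHs φ lam ℓ u → ∀ t ∈ Ioc (0 : ℝ) T,
      sobNorm φ lam (3 / 2) (V u t) ≤ C * (t ^ e * sobNorm φ lam ℓ u + Cψ) := by
  have hℓ' : min ℓ (3 / 2) ≤ ℓ := min_le_left _ _
  obtain ⟨C, hC, hCs⟩ := hsmooth (min ℓ (3 / 2)) (3 / 2) (le_min hℓ (by norm_num))
    (min_le_right _ _) (by linarith)
  refine ⟨C, -(3 / 2 - min ℓ (3 / 2)) / 2, hC,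
    by linarith [le_min hℓ (by norm_num : (0 : ℝ) ≤ 3 / 2)], fun u hu t ht => ?_⟩
  have hte := rpow_nonneg ht.1.le (-(3 / 2 - min ℓ (3 / 2)) / 2)
  have hmono := sobNorm_le_sobNorm hlam hℓ' hu
  exact (hCs u (hu.of_le hlam hℓ') t ht).trans (by gcongr)

theorem norm_add_intervalIntegral_le {E : Type*} [NormedAddCommGroup E] [NormedSpace ℝ E]
    {f : ℝ → E} {t T A B e : ℝ} (z₀ : E) (ht : t ∈ Icc 0 T) (he : -1 < e) (hA : 0 ≤ A)
    (hB : 0 ≤ B) (hf : ∀ s ∈ Ioc 0 T, ‖f s‖ ≤ A * s ^ e + B) :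
    ‖z₀ + ∫ s in 0..t, f s‖ ≤ ‖z₀‖ + (A * (T ^ (e + 1) / (e + 1)) + B * T) := by
  have he1 : 0 < e + 1 := by linarith
  have hpow := (intervalIntegral.intervalIntegrable_rpow' he (a := 0) (b := t)).const_mul A
  have hint : IntervalIntegrable (fun s => A * s ^ e + B) volume 0 t :=
    hpow.add intervalIntegrable_const
  calc ‖z₀ + ∫ s in 0..t, f s‖ ≤ ‖z₀‖ + ‖∫ s in 0..t, f s‖ := norm_add_le _ _
    _ ≤ ‖z₀‖ + ∫ s in 0..t, (A * s ^ e + B) := by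
        gcongr
        exact intervalIntegral.norm_integral_le_of_norm_le ht.1
          (.of_forall fun s hs => hf s ⟨hs.1, hs.2.trans ht.2⟩) hint
    _ = ‖z₀‖ + (A * (t ^ (e + 1) / (e + 1)) + B * t) := by
        rw [intervalIntegral.integral_add hpow intervalIntegrable_const,
          intervalIntegral.integral_const_mul, integral_rpow (.inl he),
          zero_rpow he1.ne', intervalIntegral.integral_const]
        simp [mul_comm]
    _ ≤ ‖z₀‖ + (A * (T ^ (e + 1) / (e + 1)) + B * T) := by
        gcongr <;> linarith [ht.1, ht.2]

theorem eucNorm_le_of_forall_abs_le {ι : Type*} [Fintype ι] {v : ι → ℝ} {R : ℝ} (hR : 0 ≤ R)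
    (hv : ∀ i, |v i| ≤ R) : eucNorm v ≤ √(Fintype.card ι) * R := by
  rw [eucNorm, ← sqrt_sq hR, ← sqrt_mul (Nat.cast_nonneg _)]
  gcongr
  calc ∑ i, v i ^ 2 ≤ ∑ _i : ι, R ^ 2 := by
        refine Finset.sum_le_sum fun i _ => ?_
        rw [← sq_abs]
        exact pow_le_pow_left₀ (abs_nonneg _) (hv i) 2
    _ = Fintype.card ι * R ^ 2 := by simp

theorem eucNorm_le_mul_one_add {ι : Type*} [Fintype ι] {v : ι → ℝ} {P Q N : ℝ} (hP : 0 ≤ P)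
    (hQ : 0 ≤ Q) (hN : 0 ≤ N) (hv : ∀ i, |v i| ≤ P + Q * N) :
    eucNorm v ≤ (√(Fintype.card ι) * (P + Q) + 1) * (1 + N) := by
  have hcard := sqrt_nonneg (Fintype.card ι : ℝ)
  calc eucNorm v ≤ √(Fintype.card ι) * (P + Q * N) :=
        eucNorm_le_of_forall_abs_le (by positivity) hv
    _ ≤ (√(Fintype.card ι) * (P + Q) + 1) * (1 + N) := by
        nlinarith [mul_nonneg hcard hP, mul_nonneg (mul_nonneg hcard hP) hN,
          mul_nonneg (mul_nonneg hcard hQ) hN]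

theorem stmt11_general
    {H : Type*} [NormedAddCommGroup H] [InnerProductSpace ℝ H] [CompleteSpace H]
    (φ : HilbertBasis Kidx ℝ H) (lam : Kidx → ℝ)
    (hlam : ∀ k : Kidx, lam k = 4 * π ^ 2 * (((k.1.1 : ℝ)) ^ 2 + ((k.1.2 : ℝ)) ^ 2))
    -- pointwise evaluation on the torus, with the Sobolev embedding bound
    (ev : ℝ × ℝ → H →ₗ[ℝ] ℝ × ℝ)
    (hevSup : ∀ s : ℝ, 1 < s → ∃ C : ℝ, 0 < C ∧ ∀ w : H, MemHs φ lam s w →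
      ∀ x : ℝ × ℝ, ‖ev x w‖ ≤ C * sobNorm φ lam s w)
    (ν T : ℝ) (hν : 0 < ν) (hT : 0 < T)
    -- forcing ψ ∈ C([0,T];H^γ), γ ≥ 0, with ‖ψ‖_{C([0,T];H^γ)} ≤ Cψ
    (γ : ℝ) (hγ : 0 ≤ γ) (ψ : ℝ → H)
    (hψcont : ContinuousOn ψ (Set.Icc (0 : ℝ) T))
    (Cψ : ℝ) (hCψ : ∀ t ∈ Set.Icc (0 : ℝ) T, sobNorm φ lam γ (ψ t) ≤ Cψ)
    -- solution map of the Stokes equation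
    (V : H → ℝ → H) (hV : ∀ u : H, IsStokesSolution φ lam ν T ψ u (V u))
    -- the analytic-semigroup smoothing estimate (4.9)
    (hsmooth : ∀ ℓ s : ℝ, 0 ≤ ℓ → ℓ ≤ s → s < 2 + γ → ∃ C : ℝ, 0 < C ∧
      ∀ u : H, MemHs φ lam ℓ u → ∀ t ∈ Set.Ioc (0 : ℝ) T,
        sobNorm φ lam s (V u t) ≤ C * (t ^ (-(s - ℓ) / 2) * sobNorm φ lam ℓ u + Cψ))
    -- the J tracers, starting from z_{j,0}, driven by the velocity field V u
    {J K : ℕ} (z0 : Fin J → ℝ × ℝ) (Ztr : H → Fin J → ℝ → ℝ × ℝ)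
    (hZ : ∀ (u : H) (j : Fin J), ContinuousOn (Ztr u j) (Set.Icc (0 : ℝ) T) ∧
      ∀ t ∈ Set.Icc (0 : ℝ) T,
        Ztr u j t = z0 j + ∫ s in (0 : ℝ)..t, ev (Ztr u j s) (V u s))
    -- observation times 0 < t₁ < … < t_K ≤ T
    (tt : Fin K → ℝ) (httpos : ∀ k, 0 < tt k ∧ tt k ≤ T)
    -- the observation operator G : H → ℝ^{2JK}
    (G : H → (Fin J × Fin K × Fin 2 → ℝ))
    (hG : ∀ (u : H) (p : Fin J × Fin K × Fin 2),
      G u p = if p.2.2 = 0 then (Ztr u p.1 (tt p.2.1)).1 else (Ztr u p.1 (tt p.2.1)).2) :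
    ∀ ℓ : ℝ, 0 ≤ ℓ → ∃ C : ℝ, 0 < C ∧ ∀ u : H, MemHs φ lam ℓ u →
      eucNorm (G u) ≤ C * (1 + sobNorm φ lam ℓ u) := by
  intro ℓ hℓ
  have hlam1 : ∀ k, 1 ≤ lam k := fun k => hlam k ▸ one_le_four_pi_sq_mul k
  obtain ⟨Cemb, hCemb0, hCemb⟩ := hevSup (3 / 2) (by norm_num)
  obtain ⟨Cs, e, hCs0, he, hCs⟩ := exists_smoothing_to_three_half hlam1 hγ hsmooth hℓ
  have hCψ0 : 0 ≤ Cψ := (sqrt_nonneg _).trans (hCψ 0 ⟨le_rfl, hT.le⟩)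
  set P := ∑ j, ‖z0 j‖ + Cemb * Cs * Cψ * T
  set Q := Cemb * Cs * (T ^ (e + 1) / (e + 1))
  have hQ : 0 ≤ Q := by
    have : 0 < e + 1 := by linarith
    have := rpow_nonneg hT.le (e + 1)
    positivity
  refine ⟨√(Fintype.card (Fin J × Fin K × Fin 2)) * (P + Q) + 1, by positivity, fun u hu => ?_⟩
  set N := sobNorm φ lam ℓ u
  have hN : 0 ≤ N := sqrt_nonneg _
  have hvel : ∀ σ ∈ Ioc 0 T, ∀ x, ‖ev x (V u σ)‖ ≤ Cemb * Cs * N * σ ^ e + Cemb * Cs * Cψ := by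
    intro σ hσ x
    calc ‖ev x (V u σ)‖ ≤ Cemb * sobNorm φ lam (3 / 2) (V u σ) :=
          hCemb _ ((hV u).memHs (fun k => zero_le_one.trans (hlam1 k)) hν (by norm_num)
            (by norm_num) hψcont hσ) x
      _ ≤ Cemb * (Cs * (σ ^ e * N + Cψ)) := by gcongr; exact hCs u hu σ hσ
      _ = Cemb * Cs * N * σ ^ e + Cemb * Cs * Cψ := by ring
  refine eucNorm_le_mul_one_add (by positivity) hQ hN fun ⟨j, m, i⟩ => ?_
  have hm : tt m ∈ Icc 0 T := ⟨(httpos m).1.le, (httpos m).2⟩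
  have hZ_le : ‖Ztr u j (tt m)‖ ≤ P + Q * N := by
    rw [(hZ u j).2 _ hm]
    refine (norm_add_intervalIntegral_le _ hm he (by positivity) (by positivity)
      fun σ hσ => hvel σ hσ _).trans ?_
    linarith [Finset.single_le_sum (fun j _ => norm_nonneg (z0 j)) (Finset.mem_univ j)]
  rw [hG]
  split_ifs
  · exact (norm_fst_le _).trans hZ_le
  · exact (norm_snd_le _).trans hZ_le

theorem stmt11
    {H : Type*} [NormedAddCommGroup H] [InnerProductSpace ℝ H] [CompleteSpace H]
    (φ : HilbertBasis Kidx ℝ H) (lam : Kidx → ℝ)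
    (hlam : ∀ k : Kidx, lam k = 4 * π ^ 2 * (((k.1.1 : ℝ)) ^ 2 + ((k.1.2 : ℝ)) ^ 2))
    -- pointwise evaluation on the torus, with the Sobolev embedding bound
    (ev : ℝ × ℝ → H →ₗ[ℝ] ℝ × ℝ)
    (hevSup : ∀ s : ℝ, 1 < s → ∃ C : ℝ, 0 < C ∧ ∀ w : H, MemHs φ lam s w →
      ∀ x : ℝ × ℝ, ‖ev x w‖ ≤ C * sobNorm φ lam s w)
    (ν T : ℝ) (hν : 0 < ν) (hT : 0 < T)
    -- forcing ψ ∈ C([0,T];H^γ), γ ≥ 0, with ‖ψ‖_{C([0,T];H^γ)} ≤ Cψ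
    (γ : ℝ) (hγ : 0 ≤ γ) (ψ : ℝ → H)
    (hψcont : ContinuousOn ψ (Set.Icc (0 : ℝ) T))
    (hψγ : ∀ t ∈ Set.Icc (0 : ℝ) T, MemHs φ lam γ (ψ t))
    (Cψ : ℝ) (hCψ : ∀ t ∈ Set.Icc (0 : ℝ) T, sobNorm φ lam γ (ψ t) ≤ Cψ)
    -- solution map of the Stokes equation
    (V : H → ℝ → H) (hV : ∀ u : H, IsStokesSolution φ lam ν T ψ u (V u))
    -- the analytic-semigroup smoothing estimate (4.9)
    (hsmooth : ∀ ℓ s : ℝ, 0 ≤ ℓ → ℓ ≤ s → s < 2 + γ → ∃ C : ℝ, 0 < C ∧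
      ∀ u : H, MemHs φ lam ℓ u → ∀ t ∈ Set.Ioc (0 : ℝ) T,
        sobNorm φ lam s (V u t) ≤ C * (t ^ (-(s - ℓ) / 2) * sobNorm φ lam ℓ u + Cψ))
    -- the J tracers, starting from z_{j,0}, driven by the velocity field V u
    {J K : ℕ} (z0 : Fin J → ℝ × ℝ) (Ztr : H → Fin J → ℝ → ℝ × ℝ)
    (hZ : ∀ (u : H) (j : Fin J), ContinuousOn (Ztr u j) (Set.Icc (0 : ℝ) T) ∧
      ∀ t ∈ Set.Icc (0 : ℝ) T,
        Ztr u j t = z0 j + ∫ s in (0 : ℝ)..t, ev (Ztr u j s) (V u s))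
    -- observation times 0 < t₁ < … < t_K ≤ T
    (tt : Fin K → ℝ) (htt : StrictMono tt) (httpos : ∀ k, 0 < tt k ∧ tt k ≤ T)
    -- the observation operator G : H → ℝ^{2JK}
    (G : H → (Fin J × Fin K × Fin 2 → ℝ))
    (hG : ∀ (u : H) (p : Fin J × Fin K × Fin 2),
      G u p = if p.2.2 = 0 then (Ztr u p.1 (tt p.2.1)).1 else (Ztr u p.1 (tt p.2.1)).2) :
    ∀ ℓ : ℝ, 0 ≤ ℓ → ∃ C : ℝ, 0 < C ∧ ∀ u : H, MemHs φ lam ℓ u →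
      eucNorm (G u) ≤ C * (1 + sobNorm φ lam ℓ u) :=
  stmt11_general φ lam hlam ev hevSup ν T hν hT γ hγ ψ hψcont Cψ hCψ V hV hsmooth z0 Ztr hZ tt
    httpos G hG
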